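/- arXiv:math/0508584 — 3 statements merged into one kernel-verified Lean document; each statement's English description precedes it below -/
import Mathlib

section
/- For the 6-dimensional Lie algebra L_{6,4} with nonzero brackets [X_1,X_2]=2X_2, [X_1,X_3]=-2X_3, [X_2,X_3]=X_1, [X_1,X_4]=2X_4, [X_1,X_6]=-2X_6, [X_2,X_5]=2X_4, [X_2,X_6]=X_5, [X_3,X_4]=X_5, [X_3,X_5]=2X_6, the polynomials I_1 = x_5^2 - 4 x_4 x_6 and I_2 = x_1 x_5 + 2 x_2 x_6 - 2 x_3 x_4 are annihilated by all coadjoint vector fields X̂_i = C_{ij}^k x_k ∂/∂x_j, i = 1,…,6. -/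
/-!
`X̂ᵢ F` at `x` is the derivative of `F` at `x` in the direction of the coadjoint vector
`(∑ₖ Cᵢⱼₖ xₖ)ⱼ`. Writing out these six vectors for `L₆,₄` and the gradients of the two
quadratic polynomials, each invariance condition becomes a polynomial identity.
-/

open scoped BigOperators

noncomputable def Xhat {n : ℕ} (C : Fin n → Fin n → Fin n → ℝ)
    (F : (Fin n → ℝ) → ℝ) (i : Fin n) (x : Fin n → ℝ) : ℝ :=
  ∑ j, ∑ k, C i j k * x k * fderiv ℝ F x (Pi.single j 1)

def C64 : Fin 6 → Fin 6 → Fin 6 → ℝ := fun i j k =>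
  match i.1, j.1, k.1 with
  | 0, 1, 1 => 2
  | 1, 0, 1 => -2
  | 0, 2, 2 => -2
  | 2, 0, 2 => 2
  | 1, 2, 0 => 1
  | 2, 1, 0 => -1
  | 0, 3, 3 => 2
  | 3, 0, 3 => -2
  | 0, 5, 5 => -2
  | 5, 0, 5 => 2
  | 1, 4, 3 => 2
  | 4, 1, 3 => -2
  | 1, 5, 4 => 1
  | 5, 1, 4 => -1
  | 2, 3, 4 => 1
  | 3, 2, 4 => -1
  | 2, 4, 5 => 2
  | 4, 2, 5 => -2
  | _, _, _ => 0

def coadjointField {n : ℕ} (C : Fin n → Fin n → Fin n → ℝ) (i : Fin n) (x : Fin n → ℝ) :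
    Fin n → ℝ :=
  fun j => ∑ k, C i j k * x k

theorem Xhat_eq_fderiv_coadjointField {n : ℕ} (C : Fin n → Fin n → Fin n → ℝ)
    (F : (Fin n → ℝ) → ℝ) (i : Fin n) (x : Fin n → ℝ) :
    Xhat C F i x = fderiv ℝ F x (coadjointField C i x) := by
  have hv : coadjointField C i x = ∑ j, (∑ k, C i j k * x k) • Pi.single j 1 := by
    ext j
    simp [coadjointField, Finset.sum_apply, Pi.single_apply]
  simp only [Xhat, hv, map_sum, map_smul, smul_eq_mul, Finset.sum_mul]

theorem hasFDerivAt_apply_mul_apply {ι : Type*} [Fintype ι] (a b : ι) (x : ι → ℝ) :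
    HasFDerivAt (fun y : ι → ℝ => y a * y b)
      (x a • ContinuousLinearMap.proj (R := ℝ) (φ := fun _ : ι => ℝ) b +
        x b • ContinuousLinearMap.proj a) x :=
  (hasFDerivAt_apply a x).mul (hasFDerivAt_apply b x)

theorem fderiv_I1_apply (x v : Fin 6 → ℝ) :
    fderiv ℝ (fun y : Fin 6 → ℝ => (y 4)^2 - 4 * y 3 * y 5) x v
      = 2 * x 4 * v 4 - 4 * (x 3 * v 5 + x 5 * v 3) := by
  have h : HasFDerivAt (fun y : Fin 6 → ℝ => y 4 * y 4 - 4 * (y 3 * y 5)) _ x :=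
    (hasFDerivAt_apply_mul_apply 4 4 x).sub
      ((hasFDerivAt_apply_mul_apply 3 5 x).const_mul (4 : ℝ))
  have hF : (fun y : Fin 6 → ℝ => (y 4)^2 - 4 * y 3 * y 5)
      = fun y => y 4 * y 4 - 4 * (y 3 * y 5) := by
    funext y; ring
  rw [hF, h.fderiv]
  simp only [sub_apply, smul_apply, add_apply, ContinuousLinearMap.proj_apply, smul_eq_mul]
  ring

theorem fderiv_I2_apply (x v : Fin 6 → ℝ) :
    fderiv ℝ (fun y : Fin 6 → ℝ => y 0 * y 4 + 2 * y 1 * y 5 - 2 * y 2 * y 3) x v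
      = (x 0 * v 4 + x 4 * v 0) + 2 * (x 1 * v 5 + x 5 * v 1) - 2 * (x 2 * v 3 + x 3 * v 2) := by
  have h : HasFDerivAt (fun y : Fin 6 → ℝ => y 0 * y 4 + 2 * (y 1 * y 5) - 2 * (y 2 * y 3)) _ x :=
    ((hasFDerivAt_apply_mul_apply 0 4 x).add
        ((hasFDerivAt_apply_mul_apply 1 5 x).const_mul (2 : ℝ))).sub
      ((hasFDerivAt_apply_mul_apply 2 3 x).const_mul (2 : ℝ))
  have hF : (fun y : Fin 6 → ℝ => y 0 * y 4 + 2 * y 1 * y 5 - 2 * y 2 * y 3)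
      = fun y => y 0 * y 4 + 2 * (y 1 * y 5) - 2 * (y 2 * y 3) := by
    funext y; ring
  rw [hF, h.fderiv]
  simp only [sub_apply, smul_apply, add_apply, ContinuousLinearMap.proj_apply, smul_eq_mul]

-- Row `i` is the field `X̂ᵢ₊₁` of the paper: indices are shifted by one.
set_option maxHeartbeats 1000000 in
theorem coadjointField_C64 (i : Fin 6) (x : Fin 6 → ℝ) :
    coadjointField C64 i x =
      ![![0, 2 * x 1, -2 * x 2, 2 * x 3, 0, -2 * x 5],
        ![-2 * x 1, 0, x 0, 0, 2 * x 3, x 4],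
        ![2 * x 2, -x 0, 0, x 4, 2 * x 5, 0],
        ![-2 * x 3, 0, -x 4, 0, 0, 0],
        ![0, -2 * x 3, -2 * x 5, 0, 0, 0],
        ![2 * x 5, -x 4, 0, 0, 0, 0]] i := by
  funext j
  fin_cases i <;> fin_cases j <;> simp [coadjointField, Fin.sum_univ_six, C64]

theorem L64_invariants :
    ∀ (i : Fin 6) (x : Fin 6 → ℝ),
      Xhat C64 (fun y => (y 4)^2 - 4 * y 3 * y 5) i x = 0 ∧
      Xhat C64 (fun y => y 0 * y 4 + 2 * y 1 * y 5 - 2 * y 2 * y 3) i x = 0 := by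
  intro i x
  simp only [Xhat_eq_fderiv_coadjointField, fderiv_I1_apply, fderiv_I2_apply, coadjointField_C64]
  fin_cases i <;> simp only [Fin.zero_eta, Fin.mk_one, Fin.reduceFinMk, Matrix.cons_val] <;>
    constructor <;> ring
end

section
/- For the 8-dimensional Lie algebra L_{8,1}^p (p ≠ 0) obtained from L_{6,1} ⊕ ℝX_7 by adjoining X_8 with [X_j,X_8]=X_j for j=4,5,6 and [X_7,X_8]=pX_7 (and all other brackets as in L_{6,1}: [X_2,X_3]=X_1, [X_1,X_2]=X_3, [X_1,X_3]=-X_2, [X_1,X_5]=X_6, [X_1,X_6]=-X_5, [X_2,X_4]=-X_6, [X_2,X_6]=X_4, [X_3,X_4]=X_5, [X_3,X_5]=-X_4), the rational functions J_1 = (x_4^2+x_5^2+x_6^2)^p / x_7^2 and J_2 = (x_1x_4+x_2x_5+x_3x_6)^p / x_7 are, on the open set where x_7 > 0 and x_4^2+x_5^2+x_6^2 > 0 and x_1x_4+x_2x_5+x_3x_6 > 0, annihilated by all coadjoint vector fields X̂_i = C_{ij}^k x_k ∂/∂x_j, i = 1,…,8. -/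
/-
`L_{6,1}` is the Euclidean algebra `e(3) = so(3) ⋉ ℝ³`, with rotations `X_1, X_2, X_3` and
translations `X_4, X_5, X_6`; its coadjoint Casimirs are `q = x_4² + x_5² + x_6²` and
`s = x_1x_4 + x_2x_5 + x_3x_6`. Neither `J_1` nor `J_2` involves `x_8`, and off the `∂_8`-direction
`X̂_1, …, X̂_6` are the coadjoint fields of `e(3)`, which kill `q`, `s` and `x_7`; `X̂_7 = p x_7 ∂_8`,
and `X̂_8 = -(x_4∂_4 + x_5∂_5 + x_6∂_6) - p x_7∂_7` scales `q`, `s`, `x_7` with weights `-2, -1, -p`.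
A quotient `a^p / b^m` of relative invariants of weights `c`, `d` has weight `p c - m d`, which
vanishes for `q^p / x_7²` and `s^p / x_7`.
-/

open scoped BigOperators

noncomputable def C81 (p : ℝ) : Fin 8 → Fin 8 → Fin 8 → ℝ := fun i j k =>
  match i.1, j.1, k.1 with
  | 1, 2, 0 => 1
  | 2, 1, 0 => -1
  | 0, 1, 2 => 1
  | 1, 0, 2 => -1
  | 0, 2, 1 => -1
  | 2, 0, 1 => 1
  | 0, 4, 5 => 1
  | 4, 0, 5 => -1
  | 0, 5, 4 => -1
  | 5, 0, 4 => 1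
  | 1, 3, 5 => -1
  | 3, 1, 5 => 1
  | 1, 5, 3 => 1
  | 5, 1, 3 => -1
  | 2, 3, 4 => 1
  | 3, 2, 4 => -1
  | 2, 4, 3 => -1
  | 4, 2, 3 => 1
  | 3, 7, 3 => 1
  | 7, 3, 3 => -1
  | 4, 7, 4 => 1
  | 7, 4, 4 => -1
  | 5, 7, 5 => 1
  | 7, 5, 5 => -1
  | 6, 7, 6 => p
  | 7, 6, 6 => -p
  | _, _, _ => 0

theorem fderiv_rpow_div_pow_eq_zero {E : Type*} [NormedAddCommGroup E] [NormedSpace ℝ E]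
    {a b : E → ℝ} {x v : E} {p c d : ℝ} {m : ℕ}
    (ha : DifferentiableAt ℝ a x) (hb : DifferentiableAt ℝ b x) (hax : 0 < a x) (hbx : b x ≠ 0)
    (hav : fderiv ℝ a x v = c * a x) (hbv : fderiv ℝ b x v = d * b x) (hcd : p * c = m * d) :
    fderiv ℝ (fun y => a y ^ p / b y ^ m) x v = 0 := by
  have hnum := ha.hasFDerivAt.rpow_const (p := p) (Or.inl hax.ne')
  have hden := (hasFDerivAt_inv (pow_ne_zero m hbx)).comp x (hb.hasFDerivAt.pow m)
  simp_rw [div_eq_mul_inv]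
  rw [HasFDerivAt.fderiv (f := fun y => a y ^ p * (b y ^ m)⁻¹) (hnum.mul hden)]
  simp only [add_apply, smul_apply, ContinuousLinearMap.coe_comp, Function.comp_apply,
    ContinuousLinearMap.toSpanSingleton_apply, hav, hbv, Real.rpow_sub_one hax.ne', smul_eq_mul,
    nsmul_eq_mul]
  have ha0 := hax.ne'
  rcases m with _ | k
  · field_simp
    linear_combination a x ^ p * hcd
  · simp only [Nat.add_sub_cancel]
    field_simp
    linear_combination b x * b x ^ k * a x ^ p * hcd

def e3Casimir₁ (y : Fin 8 → ℝ) : ℝ := y 3 ^ 2 + y 4 ^ 2 + y 5 ^ 2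

def e3Casimir₂ (y : Fin 8 → ℝ) : ℝ := y 0 * y 3 + y 1 * y 4 + y 2 * y 5

theorem fderiv_e3Casimir₁_apply (x v : Fin 8 → ℝ) :
    fderiv ℝ e3Casimir₁ x v = 2 * (x 3 * v 3 + x 4 * v 4 + x 5 * v 5) := by
  have h := (((hasFDerivAt_apply (𝕜 := ℝ) 3 x).pow 2).add
    ((hasFDerivAt_apply (𝕜 := ℝ) 4 x).pow 2)).add ((hasFDerivAt_apply (𝕜 := ℝ) 5 x).pow 2)
  rw [HasFDerivAt.fderiv (f := e3Casimir₁) h]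
  simp only [Nat.add_one_sub_one, pow_one, nsmul_eq_mul, Nat.cast_ofNat, add_apply, smul_apply,
    ContinuousLinearMap.proj_apply, smul_eq_mul]
  ring

theorem fderiv_e3Casimir₂_apply (x v : Fin 8 → ℝ) :
    fderiv ℝ e3Casimir₂ x v =
      v 0 * x 3 + x 0 * v 3 + v 1 * x 4 + x 1 * v 4 + v 2 * x 5 + x 2 * v 5 := by
  have h := ((((hasFDerivAt_apply (𝕜 := ℝ) 0 x).mul (hasFDerivAt_apply (𝕜 := ℝ) 3 x)).add
    ((hasFDerivAt_apply (𝕜 := ℝ) 1 x).mul (hasFDerivAt_apply (𝕜 := ℝ) 4 x))).add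
    ((hasFDerivAt_apply (𝕜 := ℝ) 2 x).mul (hasFDerivAt_apply (𝕜 := ℝ) 5 x)))
  rw [HasFDerivAt.fderiv (f := e3Casimir₂) h]
  simp only [add_apply, smul_apply, ContinuousLinearMap.proj_apply, smul_eq_mul]
  ring

theorem coadjointField_C81_apply_six (p : ℝ) (i : Fin 8) (x : Fin 8 → ℝ) :
    coadjointField (C81 p) i x 6 = (if i = 7 then -p else 0) * x 6 := by
  fin_cases i <;> simp [coadjointField, Fin.sum_univ_eight, C81]

set_option maxHeartbeats 1000000 in
theorem fderiv_e3Casimir₁_coadjointField (p : ℝ) (i : Fin 8) (x : Fin 8 → ℝ) :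
    fderiv ℝ e3Casimir₁ x (coadjointField (C81 p) i x) =
      (if i = 7 then -2 else 0) * e3Casimir₁ x := by
  rw [fderiv_e3Casimir₁_apply]
  fin_cases i <;> simp [coadjointField, Fin.sum_univ_eight, C81, e3Casimir₁] <;> ring

set_option maxHeartbeats 1000000 in
theorem fderiv_e3Casimir₂_coadjointField (p : ℝ) (i : Fin 8) (x : Fin 8 → ℝ) :
    fderiv ℝ e3Casimir₂ x (coadjointField (C81 p) i x) =
      (if i = 7 then -1 else 0) * e3Casimir₂ x := by
  rw [fderiv_e3Casimir₂_apply]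
  fin_cases i <;> simp [coadjointField, Fin.sum_univ_eight, C81, e3Casimir₂] <;> ring

theorem L81_rational_invariants_general (p : ℝ) :
    ∀ (i : Fin 8) (x : Fin 8 → ℝ),
      x 6 > 0 → (x 3)^2 + (x 4)^2 + (x 5)^2 > 0 →
      x 0 * x 3 + x 1 * x 4 + x 2 * x 5 > 0 →
      Xhat (C81 p) (fun y => ((y 3)^2 + (y 4)^2 + (y 5)^2) ^ p / (y 6)^2) i x = 0 ∧
      Xhat (C81 p) (fun y => (y 0 * y 3 + y 1 * y 4 + y 2 * y 5) ^ p / y 6) i x = 0 := by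
  intro i x hx hq hs
  have hx7 : fderiv ℝ (fun y : Fin 8 → ℝ => y 6) x (coadjointField (C81 p) i x) =
      (if i = 7 then -p else 0) * x 6 := by
    rw [(hasFDerivAt_apply (𝕜 := ℝ) 6 x).fderiv]
    exact coadjointField_C81_apply_six p i x
  have hd : DifferentiableAt ℝ (fun y : Fin 8 → ℝ => y 6) x := differentiableAt_apply 6 x
  rw [Xhat_eq_fderiv_coadjointField, Xhat_eq_fderiv_coadjointField]
  constructor
  · exact fderiv_rpow_div_pow_eq_zero (a := e3Casimir₁) (m := 2)
      (by unfold e3Casimir₁; fun_prop) hd hq hx.ne'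
      (fderiv_e3Casimir₁_coadjointField p i x) hx7 (by split_ifs <;> push_cast <;> ring)
  · simpa only [pow_one, e3Casimir₂] using fderiv_rpow_div_pow_eq_zero (m := 1)
      (by unfold e3Casimir₂; fun_prop) hd hs hx.ne'
      (fderiv_e3Casimir₂_coadjointField p i x) hx7 (by split_ifs <;> push_cast <;> ring)

theorem L81_rational_invariants (p : ℝ) (hp : p ≠ 0) :
    ∀ (i : Fin 8) (x : Fin 8 → ℝ),
      x 6 > 0 → (x 3)^2 + (x 4)^2 + (x 5)^2 > 0 →
      x 0 * x 3 + x 1 * x 4 + x 2 * x 5 > 0 →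
      Xhat (C81 p) (fun y => ((y 3)^2 + (y 4)^2 + (y 5)^2) ^ p / (y 6)^2) i x = 0 ∧
      Xhat (C81 p) (fun y => (y 0 * y 3 + y 1 * y 4 + y 2 * y 5) ^ p / y 6) i x = 0 :=
  L81_rational_invariants_general p
end

section
/- For the 7-dimensional Lie algebra L_{7,1} with nonzero brackets [X_2,X_3]=X_1, [X_1,X_2]=X_3, [X_1,X_3]=-X_2, [X_1,X_5]=X_6, [X_1,X_6]=-X_5, [X_2,X_4]=-X_6, [X_2,X_6]=X_4, [X_3,X_4]=X_5, [X_3,X_5]=-X_4, [X_j,X_7]=X_j for j=4,5,6, the rational function I_1 = (x_4^2+x_5^2+x_6^2)(x_1x_4+x_2x_5+x_3x_6)^{-2}, defined on the open set where x_1x_4+x_2x_5+x_3x_6 ≠ 0, is annihilated by all coadjoint vector fields X̂_i = C_{ij}^k x_k ∂/∂x_j, i = 1,…,7. -/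
open scoped BigOperators

def C71 : Fin 7 → Fin 7 → Fin 7 → ℝ := fun i j k =>
  match i.1, j.1, k.1 with
  | 1, 2, 0 => 1
  | 2, 1, 0 => -1
  | 0, 1, 2 => 1
  | 1, 0, 2 => -1
  | 0, 2, 1 => -1
  | 2, 0, 1 => 1
  | 0, 4, 5 => 1
  | 4, 0, 5 => -1
  | 0, 5, 4 => -1
  | 5, 0, 4 => 1
  | 1, 3, 5 => -1
  | 3, 1, 5 => 1
  | 1, 5, 3 => 1
  | 5, 1, 3 => -1
  | 2, 3, 4 => 1
  | 3, 2, 4 => -1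
  | 2, 4, 3 => -1
  | 4, 2, 3 => 1
  | 3, 6, 3 => 1
  | 6, 3, 3 => -1
  | 4, 6, 4 => 1
  | 6, 4, 4 => -1
  | 5, 6, 5 => 1
  | 6, 5, 5 => -1
  | _, _, _ => 0

/-!
Write `a = (x 0, x 1, x 2)` and `b = (x 3, x 4, x 5)`, so that `I₁ = ‖b‖² / ⟪a, b⟫²`.
The coadjoint fields of `X₁, X₂, X₃` rotate `a` and `b` simultaneously, those of `X₄, X₅, X₆`
move `a` orthogonally to `b` (and `x 6`, on which nothing depends), and that of `X₇` is `-b ∂_b`.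
Hence `⟪a, b⟫` and `‖b‖²` are relative invariants, with weights `χ` and `2χ` for the character
`χ` that is `-1` on `X₇` and `0` on the other generators, and a quotient `N / D²` of relative
invariants of weights `2χ` and `χ` is annihilated by every coadjoint field.
-/

def structureMatrix {n : ℕ} (C : Fin n → Fin n → Fin n → ℝ) (x : Fin n → ℝ) :
    Matrix (Fin n) (Fin n) ℝ :=
  Matrix.of fun i j => ∑ k, C i j k * x k

theorem Xhat_eq_fderiv_structureMatrix {n : ℕ} (C : Fin n → Fin n → Fin n → ℝ)
    (F : (Fin n → ℝ) → ℝ) (i : Fin n) (x : Fin n → ℝ) :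
    Xhat C F i x = fderiv ℝ F x (structureMatrix C x i) := by
  rw [Xhat, pi_eq_sum_univ' (structureMatrix C x i), map_sum]
  simp only [map_smul, smul_eq_mul, structureMatrix, Matrix.of_apply, Finset.sum_mul]

theorem fderiv_div_sq_apply_eq_zero {E : Type*} [NormedAddCommGroup E] [NormedSpace ℝ E]
    {f g : E → ℝ} {x v : E} {c : ℝ} (hf : DifferentiableAt ℝ f x) (hg : DifferentiableAt ℝ g x)
    (hx : g x ≠ 0) (hfv : fderiv ℝ f x v = 2 * c * f x) (hgv : fderiv ℝ g x v = c * g x) :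
    fderiv ℝ (fun y => f y / g y ^ 2) x v = 0 := by
  have hquot := hf.hasFDerivAt.fun_mul
    ((hasFDerivAt_inv (pow_ne_zero 2 hx)).comp x (hg.hasFDerivAt.pow 2))
  simp only [← div_eq_mul_inv, Function.comp_def] at hquot
  rw [hquot.fderiv]
  simp only [Nat.add_one_sub_one, pow_one, nsmul_eq_mul, Nat.cast_ofNat,
    ContinuousLinearMap.comp_smulₛₗ, Real.ringHom_apply, add_apply,
    smul_apply, ContinuousLinearMap.comp_apply,
    ContinuousLinearMap.toSpanSingleton_apply, smul_eq_mul, hfv, hgv]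
  field_simp
  ring

set_option maxHeartbeats 1000000 in
theorem structureMatrix_C71 (x : Fin 7 → ℝ) :
    structureMatrix C71 x =
      !![0, x 2, -x 1, 0, x 5, -x 4, 0;
        -x 2, 0, x 0, -x 5, 0, x 3, 0;
        x 1, -x 0, 0, x 4, -x 3, 0, 0;
        0, x 5, -x 4, 0, 0, 0, x 3;
        -x 5, 0, x 3, 0, 0, 0, x 4;
        x 4, -x 3, 0, 0, 0, 0, x 5;
        0, 0, 0, -x 3, -x 4, -x 5, 0] := by
  ext i j
  simp only [structureMatrix, Matrix.of_apply, Fin.sum_univ_seven]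
  fin_cases i <;> fin_cases j <;> simp [C71]

namespace L71

def dot (x : Fin 7 → ℝ) : ℝ := x 0 * x 3 + x 1 * x 4 + x 2 * x 5

def normSq (x : Fin 7 → ℝ) : ℝ := x 3 ^ 2 + x 4 ^ 2 + x 5 ^ 2

def weight (i : Fin 7) : ℝ := if i = 6 then -1 else 0

theorem differentiable_dot : Differentiable ℝ dot := by
  unfold dot
  fun_prop

theorem differentiable_normSq : Differentiable ℝ normSq := by
  unfold normSq
  fun_prop

theorem fderiv_dot_apply (x v : Fin 7 → ℝ) :
    fderiv ℝ dot x v =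
      x 0 * v 3 + x 3 * v 0 + (x 1 * v 4 + x 4 * v 1) + (x 2 * v 5 + x 5 * v 2) := by
  unfold dot
  simp (disch := fun_prop) [fderiv_fun_add, fderiv_fun_mul, fderiv_apply]

theorem fderiv_normSq_apply (x v : Fin 7 → ℝ) :
    fderiv ℝ normSq x v = 2 * x 3 * v 3 + 2 * x 4 * v 4 + 2 * x 5 * v 5 := by
  unfold normSq
  simp (disch := fun_prop) [fderiv_fun_add, fderiv_fun_pow, fderiv_apply]

theorem fderiv_dot_structureMatrix (x : Fin 7 → ℝ) (i : Fin 7) :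
    fderiv ℝ dot x (structureMatrix C71 x i) = weight i * dot x := by
  rw [fderiv_dot_apply, structureMatrix_C71, dot]
  fin_cases i <;>
    simp only [Fin.isValue, Fin.zero_eta, Fin.mk_one, Fin.reduceFinMk, Matrix.of_apply,
      Matrix.cons_val', Matrix.cons_val, Matrix.cons_val_fin_one, Matrix.cons_val_zero,
      Matrix.cons_val_one, weight, Fin.reduceEq, ↓reduceIte] <;>
    ring

theorem fderiv_normSq_structureMatrix (x : Fin 7 → ℝ) (i : Fin 7) :
    fderiv ℝ normSq x (structureMatrix C71 x i) = 2 * weight i * normSq x := by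
  rw [fderiv_normSq_apply, structureMatrix_C71, normSq]
  fin_cases i <;>
    simp only [Fin.isValue, Fin.zero_eta, Fin.mk_one, Fin.reduceFinMk, Matrix.of_apply,
      Matrix.cons_val', Matrix.cons_val, Matrix.cons_val_fin_one, Matrix.cons_val_zero,
      Matrix.cons_val_one, weight, Fin.reduceEq, ↓reduceIte] <;>
    ring

end L71

theorem L71_invariant :
    ∀ (i : Fin 7) (x : Fin 7 → ℝ),
      x 0 * x 3 + x 1 * x 4 + x 2 * x 5 ≠ 0 →
      Xhat C71 (fun y => ((y 3)^2 + (y 4)^2 + (y 5)^2)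
        / (y 0 * y 3 + y 1 * y 4 + y 2 * y 5)^2) i x = 0 := by
  intro i x hx
  rw [Xhat_eq_fderiv_structureMatrix]
  exact fderiv_div_sq_apply_eq_zero (L71.differentiable_normSq x) (L71.differentiable_dot x) hx
    (L71.fderiv_normSq_structureMatrix x i) (L71.fderiv_dot_structureMatrix x i)
end
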